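/- For every m ≥ 1, the classical Cauchy numbers satisfy c_m = (−1)^m · m! · det A, where A is the m×m lower Hessenberg matrix over ℚ with entries A_{i,j} = (−1)^{i−j+1}/(i−j+2) for 1 ≤ j ≤ i ≤ m, A_{i,i+1} = 1 for 1 ≤ i ≤ m−1, and A_{i,j} = 0 for j > i+1. -/

import Mathlib

/-! If `f * g = 1` and `f` has constant coefficient `1`, the coefficient vector of `g` solves the
lower triangular Toeplitz system `T_f x = e₀` with `det T_f = 1`, so by Cramer's rule the `m`-th
coefficient of `g` is the `(m, 0)` cofactor of `T_f`. Deleting row `0` and column `m` of `T_f`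
leaves a lower Hessenberg matrix with `1` on the superdiagonal; for `f = log(1+t)/t` its entries
`(-1)^k/(k+1)` are those of Glaisher's matrix. -/

noncomputable section

/-- The classical Cauchy numbers, defined by `t/log(1+t) = ∑_n c_n t^n/n!`, i.e.
`c_n = n! ·` (coefficient of `t^n` in the inverse of the power series
`log(1+t)/t = ∑_n (-1)^n t^n/(n+1) ∈ ℚ[[t]]`). -/
def cauchyNumber (n : ℕ) : ℚ :=
  (Nat.factorial n : ℚ) *
    PowerSeries.coeff n (PowerSeries.mk fun j => (-1 : ℚ) ^ j / (j + 1))⁻¹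

open Matrix PowerSeries

namespace PowerSeries

variable {R : Type*} [CommRing R]

def lowerToeplitz (f : R⟦X⟧) (n : ℕ) : Matrix (Fin n) (Fin n) R :=
  of fun i j => if j ≤ i then coeff (i - j : ℕ) f else 0

theorem det_lowerToeplitz (f : R⟦X⟧) (n : ℕ) :
    (lowerToeplitz f n).det = constantCoeff f ^ n := by
  have hlt : (lowerToeplitz f n).IsLowerTriangular := fun i j hij => if_neg (not_le.mpr hij)
  rw [det_of_isLowerTriangular _ hlt]
  simp [lowerToeplitz]

theorem lowerToeplitz_mulVec (f g : R⟦X⟧) (n : ℕ) :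
    lowerToeplitz f n *ᵥ (fun j : Fin n => coeff (j : ℕ) g) =
      fun i : Fin n => coeff (i : ℕ) (f * g) := by
  ext i
  rw [mulVec, dotProduct, coeff_mul, ← Finset.Nat.sum_antidiagonal_swap]
  simp only [Prod.fst_swap, Prod.snd_swap]
  rw [Finset.Nat.sum_antidiagonal_eq_sum_range_succ (fun j k => coeff k f * coeff j g)]
  simp only [lowerToeplitz, of_apply, ite_mul, zero_mul, Fin.le_iff_val_le_val]
  rw [Fin.sum_univ_eq_sum_range
      (fun j => if j ≤ (i : ℕ) then coeff ((i : ℕ) - j) f * coeff j g else 0),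
    ← Finset.sum_filter]
  congr 1
  ext j
  simp only [Finset.mem_filter, Finset.mem_range]
  omega

theorem coeff_eq_adjugate_lowerToeplitz {f g : R⟦X⟧} (hf : constantCoeff f = 1)
    (hfg : f * g = 1) (n : ℕ) (i : Fin (n + 1)) :
    coeff (i : ℕ) g = adjugate (lowerToeplitz f (n + 1)) i 0 := by
  have hsystem : lowerToeplitz f (n + 1) *ᵥ (fun j : Fin (n + 1) => coeff (j : ℕ) g) =
      Pi.single 0 1 := by
    rw [lowerToeplitz_mulVec, hfg]
    ext j
    simp only [coeff_one, Pi.single_apply, Fin.ext_iff, Fin.val_zero]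
  have hcramer := congrFun (congrArg (adjugate (lowerToeplitz f (n + 1)) *ᵥ ·) hsystem) i
  rwa [mulVec_mulVec, adjugate_mul, det_lowerToeplitz, hf, one_pow, one_smul, one_mulVec,
    mulVec_single_one] at hcramer

theorem coeff_eq_neg_one_pow_mul_det_submatrix_lowerToeplitz {f g : R⟦X⟧}
    (hf : constantCoeff f = 1) (hfg : f * g = 1) (m : ℕ) :
    coeff m g = (-1) ^ m * ((lowerToeplitz f (m + 1)).submatrix Fin.succ Fin.castSucc).det := by
  have hcofactor := coeff_eq_adjugate_lowerToeplitz hf hfg m (Fin.last m)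
  rwa [Fin.val_last, adjugate_fin_succ_eq_det_submatrix, Fin.succAbove_zero, Fin.succAbove_last,
    Fin.val_zero, Fin.val_last, zero_add] at hcofactor

end PowerSeries

theorem cauchyNumber_det_general (m : ℕ) :
    cauchyNumber m = (-1 : ℚ) ^ m * (Nat.factorial m : ℚ) *
      Matrix.det (Matrix.of fun i j : Fin m =>
        if (j : ℕ) = (i : ℕ) + 1 then 1
        else if (j : ℕ) ≤ (i : ℕ) then
          (-1 : ℚ) ^ ((i : ℕ) - (j : ℕ) + 1) / (((i : ℕ) - (j : ℕ) + 2 : ℕ) : ℚ)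
        else 0) := by
  set φ : ℚ⟦X⟧ := mk fun j => (-1 : ℚ) ^ j / (j + 1)
  have hφ : constantCoeff φ = 1 := by simp [φ]
  have hHessenberg : (lowerToeplitz φ (m + 1)).submatrix Fin.succ Fin.castSucc =
      Matrix.of fun i j : Fin m =>
        if (j : ℕ) = (i : ℕ) + 1 then 1
        else if (j : ℕ) ≤ (i : ℕ) then
          (-1 : ℚ) ^ ((i : ℕ) - (j : ℕ) + 1) / (((i : ℕ) - (j : ℕ) + 2 : ℕ) : ℚ)
        else 0 := by
    ext i j
    simp only [submatrix_apply, lowerToeplitz, of_apply, Fin.le_iff_val_le_val, Fin.val_succ,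
      Fin.val_castSucc, coeff_mk, φ]
    rcases Nat.lt_trichotomy (j : ℕ) (i + 1) with hj | hj | hj
    · rw [if_pos hj.le, if_neg hj.ne, if_pos (by omega), Nat.sub_add_comm (by omega)]
      push_cast
      ring
    · simp [hj]
    · rw [if_neg (by omega), if_neg (by omega), if_neg (by omega)]
  rw [cauchyNumber, coeff_eq_neg_one_pow_mul_det_submatrix_lowerToeplitz hφ
    (PowerSeries.mul_inv_cancel φ (by simp [hφ])), hHessenberg]
  ring

/-- **Glaisher's determinant expression of Cauchy numbers.**  For every `m ≥ 1`,
`c_m = (-1)^m m! det A`, where `A` is the `m × m` lower Hessenberg matrix over `ℚ` with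
entries `A_{i,j} = (-1)^(i-j+1)/(i-j+2)` for `j ≤ i`, `A_{i,i+1} = 1`, and `A_{i,j} = 0`
otherwise. -/
theorem cauchyNumber_det (m : ℕ) (hm : 1 ≤ m) :
    cauchyNumber m = (-1 : ℚ) ^ m * (Nat.factorial m : ℚ) *
      Matrix.det (Matrix.of fun i j : Fin m =>
        if (j : ℕ) = (i : ℕ) + 1 then 1
        else if (j : ℕ) ≤ (i : ℕ) then
          (-1 : ℚ) ^ ((i : ℕ) - (j : ℕ) + 1) / (((i : ℕ) - (j : ℕ) + 2 : ℕ) : ℚ)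
        else 0) :=
  cauchyNumber_det_general m
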